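/- Let H₁, H₂, H₃ be complex Hilbert spaces and let A : H₁ → H₂, U : H₃ → H₂, V : H₃ → H₁ be bounded linear operators. Assume the ranges R(A), R(S_A), and R(A + UV*) are closed, where S_A = I + V*A†U. If R(U) ⊆ R(A) and R(V) ⊆ R(A*), then the identity (A + UV*)† = (I + A†U F_{S_A} U*(A†)*)^{-1} (A† − A†U S_A† V*A†) (I + (A†)* V E_{S_A} V*A†)^{-1} holds if and only if U E_{S_A} V*A† and A†U F_{S_A} V* are both self-adjoint and A†U F_{S_A} E_{S_A} V*A† = 0. -/

import Mathlib

/-!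
Write `B = A + UV*` and `X = A† − A†U S† V*A†`. The range inclusions say `AA†U = U` and
`V*A†A = V*`, and with `V*A†U = S − I` a direct computation gives `BX = AA† + U E_S V*A†`,
`XB = A†A + A†U F_S V*`, `BXB = B` and `XBX = X + A†U F_S E_S V*A†`. The two weights
`M = I + A†U F_S U*(A†)*` and `N = I + (A†)* V E_S V*A†` are at least `I`, hence invertible and
self-adjoint, and they fix `B`: `BM = B = NB`. So `Z = M⁻¹XN⁻¹` satisfies `BZB = BXB = B`,
`ZBZ = Z + M⁻¹ (A†U F_S E_S V*A†) N⁻¹`, `BZ = (BX)N⁻¹` and `ZB = M⁻¹(XB)`; since `N` fixes `BX`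
from the left, `(BX)N⁻¹` is self-adjoint exactly when `BX` is, and likewise for `ZB`.
-/

open ContinuousLinearMap

/-- `Z` is the Moore–Penrose inverse of the bounded linear operator `A`. -/
def IsMPOp {E F : Type*}
    [NormedAddCommGroup E] [InnerProductSpace ℂ E] [CompleteSpace E]
    [NormedAddCommGroup F] [InnerProductSpace ℂ F] [CompleteSpace F]
    (A : E →L[ℂ] F) (Z : F →L[ℂ] E) : Prop :=
  A ∘L Z ∘L A = A ∧ Z ∘L A ∘L Z = Z ∧
    adjoint (A ∘L Z) = A ∘L Z ∧ adjoint (Z ∘L A) = Z ∘L A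

theorem IsSelfAdjoint.add_right_iff {R : Type*} [AddGroup R] [StarAddMonoid R] {a b : R}
    (ha : IsSelfAdjoint a) : IsSelfAdjoint (a + b) ↔ IsSelfAdjoint b :=
  ⟨fun h => by simpa only [neg_add_cancel_left] using ha.neg.add h, ha.add⟩

section StarRing

variable {R : Type*} [Ring R] [StarRing R] {N P : R}

theorem isSelfAdjoint_mul_ringInverse_iff (hN : IsUnit N) (hNs : IsSelfAdjoint N)
    (hNP : N * P = P) : IsSelfAdjoint (P * Ring.inverse N) ↔ IsSelfAdjoint P := by
  have hPN : star P * N = star P := by rw [← hNs.star_eq, ← star_mul, hNP]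
  have hstar : star (P * Ring.inverse N) = Ring.inverse N * star P := by
    rw [star_mul, ← Ring.inverse_star, hNs.star_eq]
  rw [isSelfAdjoint_iff, isSelfAdjoint_iff, hstar]
  constructor
  · intro h
    calc star P = N * (Ring.inverse N * star P) * N := by
          rw [← mul_assoc, Ring.mul_inverse_cancel N hN, one_mul, hPN]
      _ = N * (P * Ring.inverse N) * N := by rw [h]
      _ = P := by rw [mul_assoc, mul_assoc, Ring.inverse_mul_cancel N hN, mul_one, hNP]
  · intro h
    have hNinvP : Ring.inverse N * P = P := by
      conv_lhs => rw [← hNP]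
      rw [← mul_assoc, Ring.inverse_mul_cancel N hN, one_mul]
    have hPNinv : P * Ring.inverse N = P := by
      conv_lhs => rw [← h, ← hPN]
      rw [mul_assoc, Ring.mul_inverse_cancel N hN, mul_one, h]
    rw [h, hNinvP, hPNinv]

theorem isSelfAdjoint_ringInverse_mul_iff (hN : IsUnit N) (hNs : IsSelfAdjoint N)
    (hPN : P * N = P) : IsSelfAdjoint (Ring.inverse N * P) ↔ IsSelfAdjoint P := by
  have hNP : N * star P = star P := by rw [← hNs.star_eq, ← star_mul, hPN]
  rw [← IsSelfAdjoint.star_iff, star_mul, ← Ring.inverse_star, hNs.star_eq,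
    isSelfAdjoint_mul_ringInverse_iff hN hNs hNP, IsSelfAdjoint.star_iff]

end StarRing

section RingInverse

variable {R E F : Type*} [Semiring R] [TopologicalSpace E] [AddCommMonoid E] [Module R E]
  [TopologicalSpace F] [AddCommMonoid F] [Module R F]

theorem comp_ringInverse_of_comp_eq {B : E →L[R] F} {M : E →L[R] E} (hM : IsUnit M)
    (h : B ∘L M = B) : B ∘L Ring.inverse M = B := by
  conv_lhs => rw [← h]
  rw [comp_assoc, ← mul_def, Ring.mul_inverse_cancel M hM, one_def, comp_id]

theorem ringInverse_comp_of_comp_eq {B : E →L[R] F} {N : F →L[R] F} (hN : IsUnit N)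
    (h : N ∘L B = B) : Ring.inverse N ∘L B = B := by
  conv_lhs => rw [← h]
  rw [← comp_assoc, ← mul_def, Ring.inverse_mul_cancel N hN, one_def, id_comp]

theorem ringInverse_comp_comp_ringInverse_eq_zero_iff {M : E →L[R] E} {N : F →L[R] F}
    (hM : IsUnit M) (hN : IsUnit N) {G : F →L[R] E} :
    Ring.inverse M ∘L G ∘L Ring.inverse N = 0 ↔ G = 0 := by
  refine ⟨fun h => ?_, fun h => by rw [h, zero_comp, comp_zero]⟩
  calc G = (M * Ring.inverse M) ∘L G ∘L (Ring.inverse N * N) := by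
        rw [Ring.mul_inverse_cancel M hM, Ring.inverse_mul_cancel N hN, one_def, one_def, id_comp,
          comp_id]
    _ = M ∘L (Ring.inverse M ∘L G ∘L Ring.inverse N) ∘L N := by simp only [mul_def, comp_assoc]
    _ = 0 := by rw [h, zero_comp, comp_zero]

end RingInverse

section Operators

variable {E F K : Type*}
  [NormedAddCommGroup E] [InnerProductSpace ℂ E] [CompleteSpace E]
  [NormedAddCommGroup F] [InnerProductSpace ℂ F] [CompleteSpace F]
  [NormedAddCommGroup K] [InnerProductSpace ℂ K]

theorem one_le_one_add_comp_comp_adjoint [CompleteSpace K] {p : K →L[ℂ] K}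
    (hp : IsStarProjection p) (C : K →L[ℂ] E) : 1 ≤ 1 + C ∘L p ∘L adjoint C :=
  le_add_of_nonneg_right <|
    (nonneg_iff_isPositive _).mpr ((IsPositive.of_isStarProjection hp).conj_adjoint C)

namespace IsMPOp

variable {A : E →L[ℂ] F} {Z : F →L[ℂ] E}

theorem apply_inv_apply (h : IsMPOp A Z) (x : E) : A (Z (A x)) = A x :=
  DFunLike.congr_fun h.1 x

theorem inv_apply_inv (h : IsMPOp A Z) (y : F) : Z (A (Z y)) = Z y :=
  DFunLike.congr_fun h.2.1 y

theorem isSelfAdjoint_comp_inv (h : IsMPOp A Z) : IsSelfAdjoint (A ∘L Z) :=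
  isSelfAdjoint_iff'.mpr h.2.2.1

theorem isSelfAdjoint_inv_comp (h : IsMPOp A Z) : IsSelfAdjoint (Z ∘L A) :=
  isSelfAdjoint_iff'.mpr h.2.2.2

theorem isStarProjection_one_sub_comp_inv (h : IsMPOp A Z) : IsStarProjection (1 - A ∘L Z) :=
  IsStarProjection.one_sub
    ⟨by rw [IsIdempotentElem, mul_def, comp_assoc, h.2.1], h.isSelfAdjoint_comp_inv⟩

theorem isStarProjection_one_sub_inv_comp (h : IsMPOp A Z) : IsStarProjection (1 - Z ∘L A) :=
  IsStarProjection.one_sub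
    ⟨by rw [IsIdempotentElem, mul_def, comp_assoc, h.1], h.isSelfAdjoint_inv_comp⟩

theorem adjoint (h : IsMPOp A Z) : IsMPOp (adjoint A) (adjoint Z) := by
  obtain ⟨h₁, h₂, h₃, h₄⟩ := h
  refine ⟨?_, ?_, ?_, ?_⟩
  · simpa only [adjoint_comp, comp_assoc] using congrArg ContinuousLinearMap.adjoint h₁
  · simpa only [adjoint_comp, comp_assoc] using congrArg ContinuousLinearMap.adjoint h₂
  · rw [← adjoint_comp, h₄, h₄]
  · rw [← adjoint_comp, h₃, h₃]

theorem comp_inv_comp_of_range_le (h : IsMPOp A Z) {U : K →L[ℂ] F}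
    (hU : LinearMap.range (U : K →ₗ[ℂ] F) ≤ LinearMap.range (A : E →ₗ[ℂ] F)) :
    A ∘L Z ∘L U = U := by
  ext x
  obtain ⟨y, hy⟩ := hU ⟨x, rfl⟩
  change A (Z (U x)) = U x
  rw [← show A y = U x from hy, h.apply_inv_apply]

theorem adjoint_comp_inv_comp_of_range_le [CompleteSpace K] (h : IsMPOp A Z) {V : K →L[ℂ] E}
    (hV : LinearMap.range (V : K →ₗ[ℂ] E) ≤
      LinearMap.range ((ContinuousLinearMap.adjoint A : F →L[ℂ] E) : F →ₗ[ℂ] E)) :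
    ContinuousLinearMap.adjoint V ∘L Z ∘L A = ContinuousLinearMap.adjoint V := by
  simpa only [adjoint_comp, adjoint_adjoint, comp_assoc] using
    congrArg ContinuousLinearMap.adjoint (h.adjoint.comp_inv_comp_of_range_le hV)

end IsMPOp

theorem isMPOp_ringInverse_comp_comp_ringInverse_iff {B : E →L[ℂ] F} {X : F →L[ℂ] E}
    {M : E →L[ℂ] E} {N : F →L[ℂ] F} {G : F →L[ℂ] E} (hM : 1 ≤ M) (hN : 1 ≤ N)
    (hBM : B ∘L M = B) (hNB : N ∘L B = B) (hBXB : B ∘L X ∘L B = B)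
    (hXBX : X ∘L B ∘L X = X + G) :
    IsMPOp B (Ring.inverse M ∘L X ∘L Ring.inverse N) ↔
      IsSelfAdjoint (B ∘L X) ∧ IsSelfAdjoint (X ∘L B) ∧ G = 0 := by
  have hMu := CStarAlgebra.isUnit_of_le 1 hM
  have hNu := CStarAlgebra.isUnit_of_le 1 hN
  have hMs := IsSelfAdjoint.of_nonneg (zero_le_one.trans hM)
  have hNs := IsSelfAdjoint.of_nonneg (zero_le_one.trans hN)
  have hBMinv := comp_ringInverse_of_comp_eq hMu hBM
  have hNinvB := ringInverse_comp_of_comp_eq hNu hNB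
  have hBZ : B ∘L Ring.inverse M ∘L X ∘L Ring.inverse N = (B ∘L X) * Ring.inverse N := by
    rw [← comp_assoc, hBMinv, mul_def, comp_assoc]
  have hZB : (Ring.inverse M ∘L X ∘L Ring.inverse N) ∘L B = Ring.inverse M * (X ∘L B) := by
    rw [comp_assoc, comp_assoc, hNinvB, mul_def]
  have hBZB : B ∘L (Ring.inverse M ∘L X ∘L Ring.inverse N) ∘L B = B := by
    rw [hZB, mul_def, ← comp_assoc, hBMinv, hBXB]
  have hZBZ : (Ring.inverse M ∘L X ∘L Ring.inverse N) ∘L B ∘L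
      (Ring.inverse M ∘L X ∘L Ring.inverse N) =
      Ring.inverse M ∘L X ∘L Ring.inverse N + Ring.inverse M ∘L G ∘L Ring.inverse N := by
    simp only [comp_assoc]
    rw [← comp_assoc (Ring.inverse N) B, hNinvB, ← comp_assoc B (Ring.inverse M), hBMinv,
      ← comp_assoc B X, ← comp_assoc X (B ∘L X), hXBX, add_comp, comp_add]
  have hNBX : N * (B ∘L X) = B ∘L X := by rw [mul_def, ← comp_assoc, hNB]
  have hXBM : (X ∘L B) * M = X ∘L B := by rw [mul_def, comp_assoc, hBM]
  rw [IsMPOp, hBZB, hZBZ, add_eq_left, ringInverse_comp_comp_ringInverse_eq_zero_iff hMu hNu,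
    ← isSelfAdjoint_iff', ← isSelfAdjoint_iff', hBZ, hZB,
    isSelfAdjoint_mul_ringInverse_iff hNu hNs hNBX, isSelfAdjoint_ringInverse_mul_iff hMu hMs hXBM]
  exact ⟨fun h => ⟨h.2.2.1, h.2.2.2, h.2.1⟩, fun h => ⟨rfl, h.2.2, h.1, h.2.1⟩⟩

end Operators

namespace SMW

/- `smw` names the Sherman–Morrison–Woodbury candidate `X = A† − A†U S† V*A†`, and
`leftWeight` / `rightWeight` the operators `M` / `N`. -/

variable {H₁ H₂ H₃ : Type*}
  [NormedAddCommGroup H₁] [InnerProductSpace ℂ H₁] [CompleteSpace H₁]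
  [NormedAddCommGroup H₂] [InnerProductSpace ℂ H₂]
  [NormedAddCommGroup H₃] [InnerProductSpace ℂ H₃] [CompleteSpace H₃]
  {A : H₁ →L[ℂ] H₂} {Adag : H₂ →L[ℂ] H₁} {U : H₃ →L[ℂ] H₂} {V : H₃ →L[ℂ] H₁}
  {S Sdag : H₃ →L[ℂ] H₃}

theorem comp_leftWeight [CompleteSpace H₂] (hS : IsMPOp S Sdag)
    (hSchur : ∀ x, adjoint V (Adag (U x)) = S x - x) (hU : ∀ x, A (Adag (U x)) = U x) :
    (A + U ∘L adjoint V) ∘L (1 + Adag ∘L U ∘L (1 - Sdag ∘L S) ∘L adjoint U ∘L adjoint Adag) =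
      A + U ∘L adjoint V := by
  ext x
  simp only [comp_apply, add_apply, sub_apply, one_apply_eq_self, map_add, map_sub, hSchur, hU,
    hS.apply_inv_apply]
  abel

theorem rightWeight_comp [CompleteSpace H₂] (hS : IsMPOp S Sdag)
    (hSchur : ∀ x, adjoint V (Adag (U x)) = S x - x)
    (hV : ∀ x, adjoint V (Adag (A x)) = adjoint V x) :
    (1 + adjoint Adag ∘L V ∘L (1 - S ∘L Sdag) ∘L adjoint V ∘L Adag) ∘L (A + U ∘L adjoint V) =
      A + U ∘L adjoint V := by
  ext x
  simp only [comp_apply, add_apply, sub_apply, one_apply_eq_self, map_add, map_sub, hSchur, hV,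
    hS.apply_inv_apply]
  abel

theorem comp_smw (hSchur : ∀ x, adjoint V (Adag (U x)) = S x - x)
    (hU : ∀ x, A (Adag (U x)) = U x) :
    (A + U ∘L adjoint V) ∘L (Adag - Adag ∘L U ∘L Sdag ∘L adjoint V ∘L Adag) =
      A ∘L Adag + U ∘L (1 - S ∘L Sdag) ∘L adjoint V ∘L Adag := by
  ext x
  simp only [comp_apply, add_apply, sub_apply, one_apply_eq_self, map_sub, hSchur, hU]
  abel

theorem smw_comp (hSchur : ∀ x, adjoint V (Adag (U x)) = S x - x)
    (hV : ∀ x, adjoint V (Adag (A x)) = adjoint V x) :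
    (Adag - Adag ∘L U ∘L Sdag ∘L adjoint V ∘L Adag) ∘L (A + U ∘L adjoint V) =
      Adag ∘L A + Adag ∘L U ∘L (1 - Sdag ∘L S) ∘L adjoint V := by
  ext x
  simp only [comp_apply, add_apply, sub_apply, one_apply_eq_self, map_add, map_sub, hSchur, hV]
  abel

theorem comp_smw_comp [CompleteSpace H₂] (hA : IsMPOp A Adag) (hS : IsMPOp S Sdag)
    (hSchur : ∀ x, adjoint V (Adag (U x)) = S x - x) (hU : ∀ x, A (Adag (U x)) = U x)
    (hV : ∀ x, adjoint V (Adag (A x)) = adjoint V x) :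
    (A + U ∘L adjoint V) ∘L (Adag - Adag ∘L U ∘L Sdag ∘L adjoint V ∘L Adag) ∘L
      (A + U ∘L adjoint V) = A + U ∘L adjoint V := by
  ext x
  simp only [comp_apply, add_apply, sub_apply, map_add, map_sub, hSchur, hU, hV,
    hA.apply_inv_apply, hS.apply_inv_apply]
  abel

theorem smw_comp_smw [CompleteSpace H₂] (hA : IsMPOp A Adag) (hS : IsMPOp S Sdag)
    (hSchur : ∀ x, adjoint V (Adag (U x)) = S x - x) (hU : ∀ x, A (Adag (U x)) = U x) :
    (Adag - Adag ∘L U ∘L Sdag ∘L adjoint V ∘L Adag) ∘L (A + U ∘L adjoint V) ∘L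
      (Adag - Adag ∘L U ∘L Sdag ∘L adjoint V ∘L Adag) =
      (Adag - Adag ∘L U ∘L Sdag ∘L adjoint V ∘L Adag) +
        Adag ∘L U ∘L (1 - Sdag ∘L S) ∘L (1 - S ∘L Sdag) ∘L adjoint V ∘L Adag := by
  ext x
  simp only [comp_apply, add_apply, sub_apply, one_apply_eq_self, map_add, map_sub, hSchur, hU,
    hA.inv_apply_inv, hS.inv_apply_inv]
  abel

end SMW

theorem stmt_18_general {H₁ H₂ H₃ : Type*}
    [NormedAddCommGroup H₁] [InnerProductSpace ℂ H₁] [CompleteSpace H₁]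
    [NormedAddCommGroup H₂] [InnerProductSpace ℂ H₂] [CompleteSpace H₂]
    [NormedAddCommGroup H₃] [InnerProductSpace ℂ H₃] [CompleteSpace H₃]
    (A : H₁ →L[ℂ] H₂) (U : H₃ →L[ℂ] H₂) (V : H₃ →L[ℂ] H₁)
    (Adag : H₂ →L[ℂ] H₁) (hAdag : IsMPOp A Adag)
    (S : H₃ →L[ℂ] H₃) (hS : S = 1 + adjoint V ∘L Adag ∘L U)
    (Sdag : H₃ →L[ℂ] H₃) (hSdag : IsMPOp S Sdag)
    (ES : H₃ →L[ℂ] H₃) (hES : ES = 1 - S ∘L Sdag)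
    (FS : H₃ →L[ℂ] H₃) (hFS : FS = 1 - Sdag ∘L S)
    (hU : LinearMap.range (U : H₃ →ₗ[ℂ] H₂) ≤ LinearMap.range (A : H₁ →ₗ[ℂ] H₂))
    (hV : LinearMap.range (V : H₃ →ₗ[ℂ] H₁) ≤ LinearMap.range ((adjoint A : H₂ →L[ℂ] H₁) : H₂ →ₗ[ℂ] H₁)) :
    IsMPOp (A + U ∘L adjoint V)
        (Ring.inverse (1 + Adag ∘L U ∘L FS ∘L adjoint U ∘L adjoint Adag) ∘L
          (Adag - Adag ∘L U ∘L Sdag ∘L adjoint V ∘L Adag) ∘L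
          Ring.inverse (1 + adjoint Adag ∘L V ∘L ES ∘L adjoint V ∘L Adag)) ↔
      (adjoint (U ∘L ES ∘L adjoint V ∘L Adag) = U ∘L ES ∘L adjoint V ∘L Adag ∧
        adjoint (Adag ∘L U ∘L FS ∘L adjoint V) = Adag ∘L U ∘L FS ∘L adjoint V ∧
        Adag ∘L U ∘L FS ∘L ES ∘L adjoint V ∘L Adag = 0) := by
  subst hES hFS
  have hUA : ∀ x, A (Adag (U x)) = U x :=
    DFunLike.congr_fun (hAdag.comp_inv_comp_of_range_le hU)
  have hVA : ∀ x, adjoint V (Adag (A x)) = adjoint V x :=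
    DFunLike.congr_fun (hAdag.adjoint_comp_inv_comp_of_range_le hV)
  have hSchur : ∀ x, adjoint V (Adag (U x)) = S x - x := fun x => by
    rw [hS, add_apply, one_apply_eq_self, add_sub_cancel_left, comp_apply, comp_apply]
  have hM : 1 ≤ 1 + Adag ∘L U ∘L (1 - Sdag ∘L S) ∘L adjoint U ∘L adjoint Adag := by
    simpa only [adjoint_comp, comp_assoc] using
      one_le_one_add_comp_comp_adjoint hSdag.isStarProjection_one_sub_inv_comp (Adag ∘L U)
  have hN : 1 ≤ 1 + adjoint Adag ∘L V ∘L (1 - S ∘L Sdag) ∘L adjoint V ∘L Adag := by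
    simpa only [adjoint_comp, adjoint_adjoint, comp_assoc] using
      one_le_one_add_comp_comp_adjoint hSdag.isStarProjection_one_sub_comp_inv (adjoint Adag ∘L V)
  rw [isMPOp_ringInverse_comp_comp_ringInverse_iff hM hN (SMW.comp_leftWeight hSdag hSchur hUA)
      (SMW.rightWeight_comp hSdag hSchur hVA) (SMW.comp_smw_comp hAdag hSdag hSchur hUA hVA)
      (SMW.smw_comp_smw hAdag hSdag hSchur hUA),
    SMW.comp_smw hSchur hUA, SMW.smw_comp hSchur hVA,
    hAdag.isSelfAdjoint_comp_inv.add_right_iff, hAdag.isSelfAdjoint_inv_comp.add_right_iff,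
    isSelfAdjoint_iff', isSelfAdjoint_iff']

theorem stmt_18 {H₁ H₂ H₃ : Type*}
    [NormedAddCommGroup H₁] [InnerProductSpace ℂ H₁] [CompleteSpace H₁]
    [NormedAddCommGroup H₂] [InnerProductSpace ℂ H₂] [CompleteSpace H₂]
    [NormedAddCommGroup H₃] [InnerProductSpace ℂ H₃] [CompleteSpace H₃]
    (A : H₁ →L[ℂ] H₂) (U : H₃ →L[ℂ] H₂) (V : H₃ →L[ℂ] H₁)
    (Adag : H₂ →L[ℂ] H₁) (hAdag : IsMPOp A Adag)
    (S : H₃ →L[ℂ] H₃) (hS : S = 1 + adjoint V ∘L Adag ∘L U)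
    (Sdag : H₃ →L[ℂ] H₃) (hSdag : IsMPOp S Sdag)
    (ES : H₃ →L[ℂ] H₃) (hES : ES = 1 - S ∘L Sdag)
    (FS : H₃ →L[ℂ] H₃) (hFS : FS = 1 - Sdag ∘L S)
    (hAclosed : IsClosed (LinearMap.range (A : H₁ →ₗ[ℂ] H₂) : Set H₂))
    (hSclosed : IsClosed (LinearMap.range (S : H₃ →ₗ[ℂ] H₃) : Set H₃))
    (hBclosed : IsClosed (LinearMap.range ((A + U ∘L adjoint V : H₁ →L[ℂ] H₂) : H₁ →ₗ[ℂ] H₂) : Set H₂))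
    (hU : LinearMap.range (U : H₃ →ₗ[ℂ] H₂) ≤ LinearMap.range (A : H₁ →ₗ[ℂ] H₂))
    (hV : LinearMap.range (V : H₃ →ₗ[ℂ] H₁) ≤ LinearMap.range ((adjoint A : H₂ →L[ℂ] H₁) : H₂ →ₗ[ℂ] H₁)) :
    IsMPOp (A + U ∘L adjoint V)
        (Ring.inverse (1 + Adag ∘L U ∘L FS ∘L adjoint U ∘L adjoint Adag) ∘L
          (Adag - Adag ∘L U ∘L Sdag ∘L adjoint V ∘L Adag) ∘L
          Ring.inverse (1 + adjoint Adag ∘L V ∘L ES ∘L adjoint V ∘L Adag)) ↔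
      (adjoint (U ∘L ES ∘L adjoint V ∘L Adag) = U ∘L ES ∘L adjoint V ∘L Adag ∧
        adjoint (Adag ∘L U ∘L FS ∘L adjoint V) = Adag ∘L U ∘L FS ∘L adjoint V ∧
        Adag ∘L U ∘L FS ∘L ES ∘L adjoint V ∘L Adag = 0) :=
  stmt_18_general A U V Adag hAdag S hS Sdag hSdag ES hES FS hFS hU hV
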